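/- arXiv:2010.05804 — 4 statements merged into one kernel-verified Lean document; each statement's English description precedes it below -/
import Mathlib

section
/- Let s be an s-number. Then for every n ∈ ℕ the entries of the matrices g_{n,s} satisfy: c_{n+1,s} > c_{n,s} > 0, c_{n+1,s} + d_{n+1,s} ≥ c_{n,s} + d_{n,s} > 0, and d_{n,s} ≤ 0. -/
/-!
Right multiplication by `V m` sends a row `(c, d)` to `(m c + d, -c)`. The invariant
`d ≤ 0 < c + d` forces `c > 0`, and for `m ≥ 2` it is preserved: the new row has
`c + d` increased by `(m - 2) c ≥ 0`, while `c` itself increases by `(m - 1) c + d ≥ c + d > 0`.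
-/

/-- The 2×2 integer matrix V(m) = ((m, -1), (1, 0)). -/
def V (m : ℤ) : Matrix (Fin 2) (Fin 2) ℤ := !![m, -1; 1, 0]

/-- The matrix g_{n,s} = V(s 0) · V(s 1) ··· V(s n). -/
def gMat (s : ℕ → ℤ) (n : ℕ) : Matrix (Fin 2) (Fin 2) ℤ :=
  ((List.range (n + 1)).map fun i => V (s i)).prod

theorem mul_V_apply_zero (M : Matrix (Fin 2) (Fin 2) ℤ) (m : ℤ) (i : Fin 2) :
    (M * V m) i 0 = M i 0 * m + M i 1 := by
  simp [Matrix.mul_apply, V, Fin.sum_univ_two]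

theorem mul_V_apply_one (M : Matrix (Fin 2) (Fin 2) ℤ) (m : ℤ) (i : Fin 2) :
    (M * V m) i 1 = -M i 0 := by
  simp [Matrix.mul_apply, V, Fin.sum_univ_two]

theorem gMat_zero (s : ℕ → ℤ) : gMat s 0 = V (s 0) := by
  simp [gMat]

theorem gMat_succ (s : ℕ → ℤ) (n : ℕ) : gMat s (n + 1) = gMat s n * V (s (n + 1)) := by
  rw [gMat, List.range_succ, List.map_append, List.prod_append]
  simp [gMat]

theorem gMat_one_one_nonpos_and_add_pos (s : ℕ → ℤ) (hs : ∀ n : ℕ, 1 ≤ n → 2 ≤ s n) (n : ℕ) :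
    gMat s n 1 1 ≤ 0 ∧ 0 < gMat s n 1 0 + gMat s n 1 1 := by
  induction n with
  | zero => simp [gMat_zero, V]
  | succ n ih =>
    obtain ⟨hd, hcd⟩ := ih
    have hm : 2 ≤ s (n + 1) := hs (n + 1) n.succ_pos
    rw [gMat_succ, mul_V_apply_zero, mul_V_apply_one]
    constructor <;> nlinarith

/-- For an s-number s (s n ≥ 2 for n ≥ 1) and every n ∈ ℕ:
c_{n+1,s} > c_{n,s} > 0, c_{n+1,s} + d_{n+1,s} ≥ c_{n,s} + d_{n,s} > 0, d_{n,s} ≤ 0. -/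
theorem stmt_3 (s : ℕ → ℤ) (hs : ∀ n : ℕ, 1 ≤ n → 2 ≤ s n) (n : ℕ) :
    gMat s (n + 1) 1 0 > gMat s n 1 0 ∧ gMat s n 1 0 > 0 ∧
    gMat s (n + 1) 1 0 + gMat s (n + 1) 1 1 ≥ gMat s n 1 0 + gMat s n 1 1 ∧
    gMat s n 1 0 + gMat s n 1 1 > 0 ∧
    gMat s n 1 1 ≤ 0 := by
  obtain ⟨hd, hcd⟩ := gMat_one_one_nonpos_and_add_pos s hs n
  have hc : 0 < gMat s n 1 0 := by linarith
  have hm : 2 ≤ s (n + 1) := hs (n + 1) n.succ_pos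
  rw [gMat_succ, mul_V_apply_zero, mul_V_apply_one]
  exact ⟨by nlinarith, hc, by nlinarith, hcd, hd⟩
end

section
/- Let s be an s-number. Then for every n ∈ ℕ one has R_n(s) − L_n(s) = 1/A_n(s) (as rational, equivalently real, numbers). -/
/-- The n-th right convergent R_n(s) = a_{n,s} / c_{n,s} as a real number. -/
noncomputable def R (s : ℕ → ℤ) (n : ℕ) : ℝ :=
  (gMat s n 0 0 : ℝ) / (gMat s n 1 0 : ℝ)

/-- The n-th left convergent L_n(s) = (a_{n,s}+b_{n,s})/(c_{n,s}+d_{n,s}) as a real number. -/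
noncomputable def L (s : ℕ → ℤ) (n : ℕ) : ℝ :=
  ((gMat s n 0 0 : ℝ) + (gMat s n 0 1 : ℝ)) / ((gMat s n 1 0 : ℝ) + (gMat s n 1 1 : ℝ))

/-- The n-th accuracy A_n(s) = (c_{n,s}+d_{n,s})·c_{n,s}, an integer. -/
def A (s : ℕ → ℤ) (n : ℕ) : ℤ :=
  (gMat s n 1 0 + gMat s n 1 1) * gMat s n 1 0

theorem div_sub_add_div_add {K : Type*} [Field K] {a b c d : K} (hc : c ≠ 0) (hcd : c + d ≠ 0) :
    a / c - (a + b) / (c + d) = (a * d - b * c) / ((c + d) * c) := by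
  field_simp
  ring

theorem det_V (m : ℤ) : (V m).det = 1 := by
  simp [V, Matrix.det_fin_two_of]

theorem det_gMat (s : ℕ → ℤ) (n : ℕ) : (gMat s n).det = 1 := by
  induction n with
  | zero => rw [gMat_zero, det_V]
  | succ n ih => rw [gMat_succ, Matrix.det_mul, ih, det_V, one_mul]

theorem gMat_succ_one_zero (s : ℕ → ℤ) (n : ℕ) :
    gMat s (n + 1) 1 0 = gMat s n 1 0 * s (n + 1) + gMat s n 1 1 := by
  simp [gMat_succ, Matrix.mul_apply, Fin.sum_univ_two, V]

theorem gMat_succ_one_one (s : ℕ → ℤ) (n : ℕ) : gMat s (n + 1) 1 1 = -gMat s n 1 0 := by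
  simp [gMat_succ, Matrix.mul_apply, Fin.sum_univ_two, V]

theorem gMat_one_zero_pos_and_add_pos (s : ℕ → ℤ) (hs : ∀ n : ℕ, 1 ≤ n → 2 ≤ s n) (n : ℕ) :
    0 < gMat s n 1 0 ∧ 0 < gMat s n 1 0 + gMat s n 1 1 := by
  induction n with
  | zero => simp [gMat_zero, V]
  | succ n ih =>
    obtain ⟨hc, hcd⟩ := ih
    have hsn : 2 ≤ s (n + 1) := hs (n + 1) n.succ_pos
    rw [gMat_succ_one_zero, gMat_succ_one_one]
    constructor <;> nlinarith

/-- For an s-number s and every n ∈ ℕ, R_n(s) − L_n(s) = 1/A_n(s). -/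
theorem stmt_4 (s : ℕ → ℤ) (hs : ∀ n : ℕ, 1 ≤ n → 2 ≤ s n) (n : ℕ) :
    R s n - L s n = 1 / (A s n : ℝ) := by
  obtain ⟨hc, hcd⟩ := gMat_one_zero_pos_and_add_pos s hs n
  have hdet : (gMat s n 0 0 * gMat s n 1 1 - gMat s n 0 1 * gMat s n 1 0 : ℝ) = 1 := by
    exact_mod_cast Matrix.det_fin_two (gMat s n) ▸ det_gMat s n
  rw [R, L, div_sub_add_div_add (by positivity) (by exact_mod_cast hcd.ne'), hdet, A]
  push_cast
  rfl
end

section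
/- The subtraction continued fraction map ι : ℝ → (ℕ → ℤ), x ↦ ιx, is a bijection from the real numbers onto the set of s-numbers, i.e. onto { s : ℕ → ℤ | s_n ≥ 2 for all n ≥ 1 }. -/
/-!
Since `x = ⌊x⌋ + 1 - 1 / r₁(x)`, the finite subtraction continued fractions
`[s₀; s₁, …, sₙ] = s₀ - 1 / [s₁; …, sₙ]` of `s = ιx` satisfy `x ≤ [s₀; …, sₙ] ≤ x + 1/(n+1)`:
the map `r ↦ 1/r` on `[1, ∞)` turns an error `1/t` into one of at most `1/(t+1)`.
Hence `x` is the limit of the convergents of `ιx`, and `ι` is injective.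

Conversely, for an s-number `s` the convergents decrease and stay in `(s₀ - 1, s₀]`, so they
converge to some `v` with `v = s₀ - 1/v'`, where `v' ≥ 1` is the value of the shifted sequence.
Then `⌊v⌋ + 1 = s₀` and `r₁(v) = v'`, and inductively `ιv = s`.
-/

/-- The remnants r_n(x): r_0(x) = x and r_{k+1}(x) = 1/((⌊r_k(x)⌋ + 1) − r_k(x)). -/
noncomputable def rem (x : ℝ) : ℕ → ℝ
  | 0 => x
  | k + 1 => 1 / (((⌊rem x k⌋ : ℝ) + 1) - rem x k)

/-- The subtraction continued fraction ιx: (ιx)_k = ⌊r_k(x)⌋ + 1, the unique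
integer m with 0 < m − r_k(x) ≤ 1. -/
noncomputable def iota (x : ℝ) (k : ℕ) : ℤ := ⌊rem x k⌋ + 1

open Filter Topology Set

noncomputable def convergent : ℕ → (ℕ → ℤ) → ℝ
  | 0, s => s 0
  | n + 1, s => s 0 - 1 / convergent n (fun k => s (k + 1))

def IsSNumber (s : ℕ → ℤ) : Prop := ∀ n, 1 ≤ n → 2 ≤ s n

noncomputable def sValue (s : ℕ → ℤ) : ℝ := ⨅ n, convergent n s

lemma rem_succ_eq_rem_rem_one (x : ℝ) (k : ℕ) : rem x (k + 1) = rem (rem x 1) k := by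
  induction k with
  | zero => rfl
  | succ k ih => rw [rem, ih]; rfl

lemma iota_succ (x : ℝ) (k : ℕ) : iota x (k + 1) = iota (rem x 1) k := by
  rw [iota, iota, rem_succ_eq_rem_rem_one]

lemma one_le_rem_succ (x : ℝ) (k : ℕ) : 1 ≤ rem x (k + 1) := by
  rw [rem, le_div_iff₀ (by linarith [Int.lt_floor_add_one (rem x k)]), one_mul]
  linarith [Int.floor_le (rem x k)]

lemma iota_zero_sub_one_div_rem_one (x : ℝ) : (iota x 0 : ℝ) - 1 / rem x 1 = x := by
  simp only [iota, rem, one_div_one_div]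
  push_cast
  ring

lemma iota_isSNumber (x : ℝ) : IsSNumber (iota x) := by
  rintro (_ | k) hk
  · omega
  · have : (1 : ℤ) ≤ ⌊rem x (k + 1)⌋ := Int.le_floor.2 (by exact_mod_cast one_le_rem_succ x k)
    rw [iota]
    omega

lemma one_div_sub_one_div_le_one_div_add_one {r A t : ℝ} (ht : 0 < t) (hr : 1 ≤ r)
    (hrA : r ≤ A) (hA : A ≤ r + 1 / t) : 1 / r - 1 / A ≤ 1 / (t + 1) := by
  have hgap : (A - r) * t ≤ 1 := (le_div_iff₀ ht).1 (by linarith)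
  have hr0 : 0 < r := by linarith
  have hA0 : 0 < A := by linarith
  rw [div_sub_div _ _ hr0.ne' hA0.ne', div_le_div_iff₀ (by positivity) (by positivity)]
  nlinarith

lemma convergent_iota_mem_Icc (n : ℕ) (x : ℝ) :
    convergent n (iota x) ∈ Icc x (x + 1 / (n + 1)) := by
  induction n generalizing x with
  | zero =>
    simp only [convergent, iota, rem]
    push_cast
    constructor <;> linarith [Int.lt_floor_add_one x, Int.floor_le x]
  | succ n ih =>
    obtain ⟨hlo, hhi⟩ := ih (rem x 1)
    have hr := one_le_rem_succ x 0
    have hstep : convergent (n + 1) (iota x) - x =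
        1 / rem x 1 - 1 / convergent n (iota (rem x 1)) := by
      simp only [convergent, iota_succ]
      linarith [iota_zero_sub_one_div_rem_one x]
    have hnonneg : 0 ≤ 1 / rem x 1 - 1 / convergent n (iota (rem x 1)) :=
      sub_nonneg.2 (one_div_le_one_div_of_le (by linarith) hlo)
    have hle := one_div_sub_one_div_le_one_div_add_one (by positivity) hr hlo hhi
    push_cast
    constructor <;> linarith

lemma tendsto_convergent_iota (x : ℝ) :
    Tendsto (fun n => convergent n (iota x)) atTop (𝓝 x) := by
  have hupper : Tendsto (fun n : ℕ => x + 1 / ((n : ℝ) + 1)) atTop (𝓝 x) := by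
    simpa using (tendsto_const_nhds (x := x)).add tendsto_one_div_add_atTop_nhds_zero_nat
  exact tendsto_of_tendsto_of_tendsto_of_le_of_le tendsto_const_nhds hupper
    (fun n => (convergent_iota_mem_Icc n x).1) (fun n => (convergent_iota_mem_Icc n x).2)

namespace IsSNumber

variable {s : ℕ → ℤ} (hs : IsSNumber s)
include hs

lemma tail : IsSNumber fun k => s (k + 1) := fun n _ => hs (n + 1) (by omega)

lemma two_le_apply_one : (2 : ℝ) ≤ s 1 := by exact_mod_cast hs 1 le_rfl

lemma convergent_mem_Ioc (n : ℕ) : convergent n s ∈ Ioc ((s 0 : ℝ) - 1) (s 0) := by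
  induction n generalizing s with
  | zero => simp [convergent]
  | succ n ih =>
    have hA : 1 < convergent n (fun k => s (k + 1)) := by
      linarith [(ih hs.tail).1, hs.two_le_apply_one]
    have hpos : 0 < 1 / convergent n (fun k => s (k + 1)) := by positivity
    have hlt : 1 / convergent n (fun k => s (k + 1)) < 1 := (div_lt_one (by linarith)).2 hA
    simp only [convergent, mem_Ioc]
    constructor <;> linarith

lemma one_lt_convergent_tail (n : ℕ) : 1 < convergent n (fun k => s (k + 1)) := by
  linarith [(hs.tail.convergent_mem_Ioc n).1, hs.two_le_apply_one]

lemma convergent_succ_le (n : ℕ) : convergent (n + 1) s ≤ convergent n s := by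
  induction n generalizing s with
  | zero =>
    have : (0 : ℝ) < 1 / s 1 := one_div_pos.2 (by linarith [hs.two_le_apply_one])
    simp only [convergent]
    linarith
  | succ n ih =>
    have hpos := hs.one_lt_convergent_tail (n + 1)
    change s 0 - 1 / convergent (n + 1) (fun k => s (k + 1)) ≤
      s 0 - 1 / convergent n (fun k => s (k + 1))
    gcongr
    exact ih hs.tail

lemma antitone_convergent : Antitone fun n => convergent n s :=
  antitone_nat_of_succ_le hs.convergent_succ_le

lemma tendsto_convergent : Tendsto (fun n => convergent n s) atTop (𝓝 (sValue s)) :=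
  tendsto_atTop_ciInf hs.antitone_convergent
    ⟨s 0 - 1, by rintro _ ⟨n, rfl⟩; exact (hs.convergent_mem_Ioc n).1.le⟩

lemma sValue_mem_Ico : sValue s ∈ Ico ((s 0 : ℝ) - 1) (s 0) := by
  constructor
  · exact ge_of_tendsto' hs.tendsto_convergent fun n => (hs.convergent_mem_Ioc n).1.le
  · calc sValue s ≤ convergent 1 s :=
          hs.antitone_convergent.le_of_tendsto hs.tendsto_convergent 1
      _ < s 0 := by
          have : (0 : ℝ) < 1 / s 1 := one_div_pos.2 (by linarith [hs.two_le_apply_one])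
          simp only [convergent]
          linarith

lemma one_le_sValue_tail : 1 ≤ sValue fun k => s (k + 1) := by
  linarith [hs.tail.sValue_mem_Ico.1, hs.two_le_apply_one]

lemma sValue_eq : sValue s = s 0 - 1 / sValue fun k => s (k + 1) := by
  refine tendsto_nhds_unique (hs.tendsto_convergent.comp (tendsto_add_atTop_nat 1)) ?_
  exact tendsto_const_nhds.sub
    (tendsto_const_nhds.div hs.tail.tendsto_convergent (by linarith [hs.one_le_sValue_tail]))

lemma floor_sValue : ⌊sValue s⌋ = s 0 - 1 := by
  rw [Int.floor_eq_iff]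
  push_cast
  constructor <;> linarith [hs.sValue_mem_Ico.1, hs.sValue_mem_Ico.2]

lemma rem_sValue_one : rem (sValue s) 1 = sValue fun k => s (k + 1) := by
  have hfrac : (⌊sValue s⌋ : ℝ) + 1 - sValue s = 1 / sValue fun k => s (k + 1) := by
    rw [hs.floor_sValue]
    push_cast
    linarith [hs.sValue_eq]
  rw [show rem (sValue s) 1 = 1 / ((⌊sValue s⌋ : ℝ) + 1 - sValue s) from rfl, hfrac,
    one_div_one_div]

lemma iota_sValue : iota (sValue s) = s := by
  funext k
  induction k generalizing s with
  | zero => rw [iota, show rem (sValue s) 0 = sValue s from rfl, hs.floor_sValue]; ring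
  | succ k ih => rw [iota_succ, hs.rem_sValue_one, ih hs.tail]

end IsSNumber

lemma sValue_iota (x : ℝ) : sValue (iota x) = x :=
  tendsto_nhds_unique (iota_isSNumber x).tendsto_convergent (tendsto_convergent_iota x)

/-- The map ι : ℝ → (ℕ → ℤ) is a bijection from ℝ onto the set of
s-numbers { s : ℕ → ℤ | s_n ≥ 2 for all n ≥ 1 }. -/
theorem stmt_15 :
    Set.BijOn (fun x : ℝ => iota x) Set.univ
      {s : ℕ → ℤ | ∀ n : ℕ, 1 ≤ n → 2 ≤ s n} :=
  Set.InvOn.bijOn ⟨fun x _ => sValue_iota x, fun _ hs => IsSNumber.iota_sValue hs⟩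
    (fun x _ => iota_isSNumber x) (Set.mapsTo_univ _ _)
end

section
/- Let x and y be real numbers. Then x < y if and only if the subtraction continued fraction of x is lexicographically smaller than that of y: there exists N ∈ ℕ such that (ιx)_N < (ιy)_N and (ιx)_n = (ιy)_n for all n < N. -/
lemma inv_sub_inv_inv_le {a b : ℝ} (hb : 0 < b) (hba : b < a) (ha : a ≤ 1) :
    (b⁻¹ - a⁻¹)⁻¹ ≤ (a - b)⁻¹ - 1 := by
  have hab : 0 < a - b := sub_pos.2 hba
  have ha0 : 0 < a := hb.trans hba
  rw [inv_sub_inv hb.ne' ha0.ne', inv_div, div_le_iff₀ hab, sub_mul, inv_mul_cancel₀ hab.ne']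
  nlinarith

namespace SubtractionContinuedFraction

variable {x y : ℝ} {k : ℕ}

lemma rem_succ_eq (x : ℝ) (k : ℕ) : rem x (k + 1) = ((iota x k : ℝ) - rem x k)⁻¹ := by
  simp [rem, iota]

lemma iota_sub_rem_pos (x : ℝ) (k : ℕ) : 0 < (iota x k : ℝ) - rem x k := by
  have := Int.lt_floor_add_one (rem x k)
  simp only [iota, Int.cast_add, Int.cast_one]
  linarith

lemma iota_sub_rem_le_one (x : ℝ) (k : ℕ) : (iota x k : ℝ) - rem x k ≤ 1 := by
  have := Int.floor_le (rem x k)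
  simp only [iota, Int.cast_add, Int.cast_one]
  linarith

lemma rem_lt_rem_of_iota_lt (h : iota x k < iota y k) : rem x k < rem y k :=
  Int.floor_mono.reflect_lt (by simpa [iota] using h)

lemma iota_le_iota_of_rem_le (h : rem x k ≤ rem y k) : iota x k ≤ iota y k := by
  simpa [iota] using Int.floor_mono h

lemma rem_succ_lt_rem_succ_iff (h : iota x k = iota y k) :
    rem x (k + 1) < rem y (k + 1) ↔ rem x k < rem y k := by
  have hx := iota_sub_rem_pos x k
  have hy := iota_sub_rem_pos y k
  rw [rem_succ_eq, rem_succ_eq, inv_lt_inv₀ hx hy, h]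
  constructor <;> intro <;> linarith

lemma rem_lt_rem_iff (h : ∀ n < k, iota x n = iota y n) : rem x k < rem y k ↔ x < y := by
  induction k with
  | zero => rfl
  | succ k ih =>
    rw [rem_succ_lt_rem_succ_iff (h k k.lt_succ_self)]
    exact ih fun n hn => h n (hn.trans k.lt_succ_self)

lemma inv_rem_sub_rem_succ_le (h : iota x k = iota y k) (hlt : rem x k < rem y k) :
    (rem y (k + 1) - rem x (k + 1))⁻¹ ≤ (rem y k - rem x k)⁻¹ - 1 := by
  have hy := iota_sub_rem_pos y k
  have hx := iota_sub_rem_le_one x k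
  rw [rem_succ_eq, rem_succ_eq, h] at *
  convert inv_sub_inv_inv_le hy (by linarith) hx using 3
  ring

lemma inv_rem_sub_rem_le (hxy : x < y) (h : ∀ n < k, iota x n = iota y n) :
    (rem y k - rem x k)⁻¹ ≤ (y - x)⁻¹ - k := by
  induction k with
  | zero => simp [rem]
  | succ k ih =>
    have h' : ∀ n < k, iota x n = iota y n := fun n hn => h n (hn.trans k.lt_succ_self)
    have hstep := inv_rem_sub_rem_succ_le (h k k.lt_succ_self) ((rem_lt_rem_iff h').2 hxy)
    push_cast
    linarith [ih h']

lemma exists_iota_ne_of_lt (hxy : x < y) : ∃ n, iota x n ≠ iota y n := by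
  by_contra! h
  obtain ⟨k, hk⟩ := exists_nat_gt (y - x)⁻¹
  have hpos : 0 < (rem y k - rem x k)⁻¹ :=
    inv_pos.2 (sub_pos.2 ((rem_lt_rem_iff fun n _ => h n).2 hxy))
  linarith [inv_rem_sub_rem_le (k := k) hxy fun n _ => h n]

end SubtractionContinuedFraction

open SubtractionContinuedFraction in
/-- For real numbers x and y, x < y if and only if ιx is
lexicographically smaller than ιy. -/
theorem stmt_16 (x y : ℝ) :
    x < y ↔ ∃ N : ℕ, iota x N < iota y N ∧ ∀ n : ℕ, n < N → iota x n = iota y n := by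
  constructor
  · intro hxy
    classical
    have hne := exists_iota_ne_of_lt hxy
    have hprefix : ∀ n < Nat.find hne, iota x n = iota y n :=
      fun n hn => not_not.1 (Nat.find_min hne hn)
    have hrem := (rem_lt_rem_iff hprefix).2 hxy
    exact ⟨Nat.find hne, (iota_le_iota_of_rem_le hrem.le).lt_of_ne (Nat.find_spec hne), hprefix⟩
  · rintro ⟨N, hlt, hprefix⟩
    exact (rem_lt_rem_iff hprefix).1 (rem_lt_rem_of_iota_lt hlt)
end
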